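/- arXiv:1411.4067 — 4 statements merged into one kernel-verified Lean document; each statement's English description precedes it below -/
import Mathlib

section
/- Let p be a prime, F = F_p, and n ≥ 2. Every function f : F^n → F defined by a canonical datum (any choice of r, partition A_1,…,A_r, segments S_1,…,S_n, and constants B_1,…,B_{r+1} satisfying the stated conditions) is a nested canalizing function. -/
/-- A proper nonempty subset `S` of `F_p` is a segment if `S = {0,…,j}` or
`F∖S = {0,…,j}` for some `0 ≤ j < p-1`. -/
def IsSegment (p : ℕ) (S : Finset (ZMod p)) : Prop :=
  ∃ j : ℕ, j < p - 1 ∧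
    ((∀ x : ZMod p, x ∈ S ↔ x.val ≤ j) ∨ (∀ x : ZMod p, x ∈ S ↔ ¬ x.val ≤ j))

/-- The indicator function `Q_S` of the complement of `S`: `0` on `S`, `1` off `S`. -/
def Qind (p : ℕ) (S : Finset (ZMod p)) (x : ZMod p) : ZMod p :=
  if x ∈ S then 0 else 1

/-- `f` is nested canalizing in the variable order `x_{σ(1)},…,x_{σ(n)}` with canalizing
input sets `S₁,…,Sₙ` (segments) and canalized outputs `b₁,…,bₙ` together with the final
output `bout = b_{n+1}`:  `f x = b i` where `i` is the least index with `x (σ i) ∈ S i`,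
and `f x = bout` if no such index exists. -/
def NestedWith (p n : ℕ) (f : (Fin n → ZMod p) → ZMod p) (σ : Equiv.Perm (Fin n))
    (S : Fin n → Finset (ZMod p)) (b : Fin n → ZMod p) (bout : ZMod p) : Prop :=
  (∀ i, IsSegment p (S i)) ∧
  (∀ x : Fin n → ZMod p, ∀ i : Fin n,
      x (σ i) ∈ S i → (∀ j : Fin n, j < i → x (σ j) ∉ S j) → f x = b i) ∧
  (∀ x : Fin n → ZMod p, (∀ i : Fin n, x (σ i) ∉ S i) → f x = bout)

/-- `f` is a nested canalizing function (NCF) if it is nested canalizing for some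
variable order, canalizing input sets and canalized outputs, with `b n ≠ b (n+1)`. -/
def IsNCF (p n : ℕ) (f : (Fin n → ZMod p) → ZMod p) : Prop :=
  ∃ (σ : Equiv.Perm (Fin n)) (S : Fin n → Finset (ZMod p)) (b : Fin n → ZMod p)
    (bout : ZMod p), (∀ h : n - 1 < n, b ⟨n - 1, h⟩ ≠ bout) ∧ NestedWith p n f σ S b bout

/-- `f` is `⟨i:a:b⟩` canalizing. -/
def IsCanalizing (p n : ℕ) (f : (Fin n → ZMod p) → ZMod p) (i : Fin n) (a b : ZMod p) :
    Prop :=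
  (∀ x, x i = a → f x = b) ∧ ¬ (∀ x, x i ≠ a → f x = b)

/-- A canonical datum in `n` variables: a layer number `r`, a partition `A₁,…,A_r` of the
variables into nonempty sets, segments `S₁,…,Sₙ`, and constants `B₁ ∈ F`,
`B₂,…,B_{r+1} ∈ F∖{0}` (here `B i` is `B_{i+1}`), with `B_r + B_{r+1} ≠ 0` if `|A_r| = 1`. -/
structure CanonicalDatum (p n : ℕ) where
  r : ℕ
  r_pos : 1 ≤ r
  r_le : r ≤ n
  A : Fin r → Finset (Fin n)
  A_nonempty : ∀ i, (A i).Nonempty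
  A_disjoint : ∀ i j, i ≠ j → Disjoint (A i) (A j)
  A_cover : ∀ v : Fin n, ∃ i, v ∈ A i
  S : Fin n → Finset (ZMod p)
  S_seg : ∀ j, IsSegment p (S j)
  B : Fin (r + 1) → ZMod p
  B_ne : ∀ i : Fin (r + 1), 0 < (i : ℕ) → B i ≠ 0
  last_cond : (A ⟨r - 1, Nat.sub_lt r_pos one_pos⟩).card = 1 →
      B ⟨r - 1, Nat.lt_succ_of_lt (Nat.sub_lt r_pos one_pos)⟩ + B ⟨r, Nat.lt_succ_self r⟩ ≠ 0

/-- Evaluation of the nested expression `M i * ( … ) + B i` with `fuel` layers left. -/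
def nestEvalAux (p : ℕ) (M B : ℕ → ZMod p) : ℕ → ℕ → ZMod p
  | 0, i => B i
  | k + 1, i => M i * nestEvalAux p M B k (i + 1) + B i

/-- The product of indicator functions of layer `i` (0-indexed), `M_{i+1}(x)`. -/
def CanonicalDatum.layer {p n : ℕ} (d : CanonicalDatum p n) (i : ℕ)
    (x : Fin n → ZMod p) : ZMod p :=
  if h : i < d.r then ∏ j ∈ d.A ⟨i, h⟩, Qind p (d.S j) (x j) else 1

/-- The constants of the datum as a function on `ℕ`. -/
def CanonicalDatum.Bn {p n : ℕ} (d : CanonicalDatum p n) (i : ℕ) : ZMod p :=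
  if h : i < d.r + 1 then d.B ⟨i, h⟩ else 0

/-- The function `f(x) = M₁(M₂(⋯(M_{r−1}(B_{r+1}M_r + B_r) + B_{r−1})⋯) + B₂) + B₁`
defined by a canonical datum. -/
def CanonicalDatum.eval {p n : ℕ} (d : CanonicalDatum p n) (x : Fin n → ZMod p) : ZMod p :=
  nestEvalAux p (fun i => d.layer i x) d.Bn d.r 0

/-- Stirling numbers of the second kind `S(n,k)`, characterized by
`k! · S(n,k) = ∑_{t=0}^{k} (−1)^t C(k,t) (k−t)^n`. -/
def stirling2 (n k : ℕ) : ℚ :=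
  (∑ t ∈ Finset.range (k + 1), (-1 : ℚ) ^ t * (k.choose t) * ((k - t : ℕ) : ℚ) ^ n) /
    k.factorial

/-- The number of nested canalizing functions `f : F_p^n → F_p`. -/
noncomputable def NCFcount (p n : ℕ) : ℕ :=
  Set.ncard {f : (Fin n → ZMod p) → ZMod p | IsNCF p n f}

/-!
Give the variables in the `i`-th block `A_i` the `i`-th rank and order them by rank. If `x`
first meets a canalizing set in block `l`, then `M₁ = ⋯ = M_{l-1} = 1` and `M_l = 0`, so the
nested expression collapses to `B₁ + ⋯ + B_l`; if it meets none, every `M_i` is `1` and the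
value is `B₁ + ⋯ + B_{r+1}`. The last two outputs differ by `B_{r+1} ≠ 0`.
-/

open Finset

lemma nestEvalAux_eq_sum_of_forall_eq_one (p : ℕ) (M B : ℕ → ZMod p) (k s : ℕ)
    (hM : ∀ j, s ≤ j → j < s + k → M j = 1) :
    nestEvalAux p M B k s = ∑ j ∈ Ico s (s + k + 1), B j := by
  induction k generalizing s with
  | zero => simp [nestEvalAux]
  | succ k ih =>
    rw [nestEvalAux, hM s le_rfl (by omega), one_mul,
      ih (s + 1) fun j hj hj' => hM j (by omega) (by omega),
      sum_eq_sum_Ico_succ_bot (by omega : s < s + (k + 1) + 1), add_comm,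
      show s + 1 + k + 1 = s + (k + 1) + 1 by omega]

lemma nestEvalAux_eq_sum_of_eq_zero (p : ℕ) (M B : ℕ → ZMod p) (k : ℕ) {s l : ℕ}
    (hsl : s ≤ l) (hlk : l < s + k) (hM : ∀ j, s ≤ j → j < l → M j = 1) (hl : M l = 0) :
    nestEvalAux p M B k s = ∑ j ∈ Ico s (l + 1), B j := by
  induction k generalizing s with
  | zero => omega
  | succ k ih =>
    rcases hsl.eq_or_lt with rfl | hsl
    · simp [nestEvalAux, hl]
    · rw [nestEvalAux, hM s le_rfl hsl, one_mul,
        ih hsl (by omega) fun j hj hj' => hM j (by omega) hj',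
        sum_eq_sum_Ico_succ_bot (by omega : s < l + 1), add_comm]

lemma Tuple.le_apply_sort_last {n : ℕ} {α : Type*} [LinearOrder α] (f : Fin n → α)
    (h : n - 1 < n) (v : Fin n) : f v ≤ f (Tuple.sort f ⟨n - 1, h⟩) := by
  have hv : (Tuple.sort f).symm v ≤ ⟨n - 1, h⟩ := Fin.le_def.mpr (by simp; omega)
  simpa using Tuple.monotone_sort f hv

namespace CanonicalDatum

variable {p n : ℕ} (d : CanonicalDatum p n)

noncomputable def layerOf (v : Fin n) : Fin d.r :=
  (d.A_cover v).choose

lemma mem_A_layerOf (v : Fin n) : v ∈ d.A (d.layerOf v) :=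
  (d.A_cover v).choose_spec

lemma layerOf_eq_of_mem {v : Fin n} {i : Fin d.r} (hv : v ∈ d.A i) : d.layerOf v = i := by
  by_contra hne
  exact disjoint_left.mp (d.A_disjoint _ _ hne) (d.mem_A_layerOf v) hv

lemma layer_eq_one {x : Fin n → ZMod p} {i : ℕ}
    (hx : ∀ v, (d.layerOf v : ℕ) = i → x v ∉ d.S v) : d.layer i x = 1 := by
  unfold layer
  split_ifs with hi
  · refine prod_eq_one fun v hv => ?_
    rw [Qind, if_neg (hx v (by rw [d.layerOf_eq_of_mem hv]))]
  · rfl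

lemma layer_layerOf_eq_zero {x : Fin n → ZMod p} {v : Fin n} (hv : x v ∈ d.S v) :
    d.layer (d.layerOf v) x = 0 := by
  rw [layer, dif_pos (d.layerOf v).isLt]
  exact prod_eq_zero (d.mem_A_layerOf v) (if_pos hv)

lemma eval_eq_sum_of_mem {x : Fin n → ZMod p} {v : Fin n} (hv : x v ∈ d.S v)
    (hfirst : ∀ w, d.layerOf w < d.layerOf v → x w ∉ d.S w) :
    d.eval x = ∑ j ∈ range (d.layerOf v + 1), d.Bn j := by
  rw [eval, range_eq_Ico]
  refine nestEvalAux_eq_sum_of_eq_zero p _ _ _ (Nat.zero_le _) (by simp) (fun j _ hj => ?_)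
    (d.layer_layerOf_eq_zero hv)
  exact d.layer_eq_one fun w hw => hfirst w (Fin.lt_def.mpr (hw ▸ hj))

lemma eval_eq_sum_of_forall_notMem {x : Fin n → ZMod p} (hx : ∀ v, x v ∉ d.S v) :
    d.eval x = ∑ j ∈ range (d.r + 1), d.Bn j := by
  rw [eval, range_eq_Ico, nestEvalAux_eq_sum_of_forall_eq_one p _ _ _ _ fun j _ _ =>
    d.layer_eq_one fun v _ => hx v]
  simp

lemma layerOf_sort_last (h : n - 1 < n) :
    (d.layerOf (Tuple.sort d.layerOf ⟨n - 1, h⟩) : ℕ) = d.r - 1 := by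
  obtain ⟨v, hv⟩ := d.A_nonempty ⟨d.r - 1, Nat.sub_lt d.r_pos one_pos⟩
  have hle := Fin.le_def.mp (Tuple.le_apply_sort_last d.layerOf h v)
  rw [d.layerOf_eq_of_mem hv] at hle
  have := (d.layerOf (Tuple.sort d.layerOf ⟨n - 1, h⟩)).isLt
  simp only at hle
  omega

lemma Bn_r_ne_zero : d.Bn d.r ≠ 0 := by
  rw [Bn, dif_pos d.r.lt_succ_self]
  exact d.B_ne _ d.r_pos

end CanonicalDatum

theorem stmt1_general (p n : ℕ) (d : CanonicalDatum p n) :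
    IsNCF p n d.eval := by
  refine ⟨Tuple.sort d.layerOf, fun i => d.S (Tuple.sort d.layerOf i),
    fun i => ∑ j ∈ range (d.layerOf (Tuple.sort d.layerOf i) + 1), d.Bn j,
    ∑ j ∈ range (d.r + 1), d.Bn j, fun h => ?_, fun i => d.S_seg _, ?_, ?_⟩
  · beta_reduce
    rw [d.layerOf_sort_last h, Nat.sub_add_cancel d.r_pos, sum_range_succ, ne_eq, left_eq_add]
    exact d.Bn_r_ne_zero
  · intro x i hi hprev
    refine d.eval_eq_sum_of_mem hi fun w hw => ?_
    have hlt : (Tuple.sort d.layerOf).symm w < i :=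
      (Tuple.monotone_sort d.layerOf).reflect_lt (by simpa using hw)
    simpa using hprev _ hlt
  · intro x hx
    exact d.eval_eq_sum_of_forall_notMem fun v => by simpa using hx ((Tuple.sort d.layerOf).symm v)

/-- every function defined by a canonical datum is a nested canalizing
function. -/
theorem stmt1 (p n : ℕ) [Fact (Nat.Prime p)] (hn : 2 ≤ n) (d : CanonicalDatum p n) :
    IsNCF p n d.eval :=
  stmt1_general p n d
end

section
/- Let p be a prime, F = F_p, and n ≥ 2. Every nested canalizing function f : F^n → F is defined by some canonical datum, i.e., there exist r, a partition A_1,…,A_r of {1,…,n} into nonempty sets, segments S_1,…,S_n of F, and constants B_1 ∈ F, B_2,…,B_{r+1} ∈ F∖{0} with B_r + B_{r+1} ≠ 0 whenever |A_r| = 1, such that f(x) = M_1(M_2(⋯(M_{r−1}(B_{r+1}M_r + B_r) + B_{r−1})⋯) + B_2) + B_1, where M_i(x) = ∏_{j∈A_i} Q_{S_j}(x_j). -/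
/-! Along the canalizing order the canalized outputs `b₁, …, b_{n+1}` split into maximal runs
of equal consecutive values. The variables of the `k`-th run form the layer `A_k` and `B`
records the jumps between consecutive runs, so the nested expression telescopes to the value
of the first run containing a canalizing input, which is `f x`. If the last layer is a single
variable then `B_r + B_{r+1} = b_{n+1} - b_{n-1}`; when this vanishes, one first replaces `S_n`
by its complement and swaps `b_n` with `b_{n+1}`, which describes the same function and puts
the last two variables into one run. -/

open Finset

section RunIndex

variable {α : Type*} [DecidableEq α] (c : ℕ → α)

def runIndex (i : ℕ) : ℕ := #{j ∈ range i | c (j + 1) ≠ c j}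

lemma runIndex_succ (i : ℕ) :
    runIndex c (i + 1) = runIndex c i + if c (i + 1) = c i then 0 else 1 := by
  unfold runIndex
  rw [range_add_one, filter_insert]
  by_cases h : c (i + 1) = c i
  · simp [h]
  · rw [if_pos h, if_neg h, card_insert_of_notMem (by simp)]

lemma runIndex_le_self (i : ℕ) : runIndex c i ≤ i :=
  (card_filter_le _ _).trans (card_range i).le

lemma runIndex_monotone : Monotone (runIndex c) :=
  monotone_nat_of_le_succ fun i => by rw [runIndex_succ]; omega

lemma runIndex_succ_eq_iff (i : ℕ) : runIndex c (i + 1) = runIndex c i ↔ c (i + 1) = c i := by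
  rw [runIndex_succ]; split_ifs with h <;> simp [h]

lemma runIndex_succ_of_ne {i : ℕ} (h : c (i + 1) ≠ c i) :
    runIndex c (i + 1) = runIndex c i + 1 := by
  rw [runIndex_succ, if_neg h]

lemma runIndex_factorsThrough : c.FactorsThrough (runIndex c) := by
  suffices h : ∀ i j, i ≤ j → runIndex c i = runIndex c j → c j = c i by
    intro i j hij
    rcases le_total i j with hle | hle
    · exact (h i j hle hij).symm
    · exact h j i hle hij.symm
  intro i j hle
  induction j, hle using Nat.le_induction with
  | base => intro _; rfl
  | succ j hij ih =>
    intro h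
    have hj : runIndex c (j + 1) = runIndex c j :=
      le_antisymm (h ▸ runIndex_monotone c hij) (runIndex_monotone c j.le_succ)
    rw [(runIndex_succ_eq_iff c j).1 hj, ih (h.trans hj)]

lemma exists_runIndex_succ_eq {k N : ℕ} (h : k < runIndex c N) :
    ∃ i < N, runIndex c i = k ∧ runIndex c (i + 1) = k + 1 := by
  have hex : ∃ i, k < runIndex c i := ⟨N, h⟩
  obtain ⟨i, hi⟩ : ∃ i, Nat.find hex = i + 1 := Nat.exists_eq_succ_of_ne_zero fun h0 => by
    have := Nat.find_spec hex
    rw [h0] at this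
    simp [runIndex] at this
  have hlt := Nat.find_spec hex
  have hle := Nat.find_min hex (show i < Nat.find hex by omega)
  have hN := Nat.find_min' hex h
  rw [hi] at hlt hN
  have := runIndex_succ c i
  split_ifs at this <;> exact ⟨i, by omega, by omega, by omega⟩

/-- The value of `c` on its `k`-th maximal run of constancy. -/
noncomputable def runValue [Inhabited α] : ℕ → α :=
  Function.extend (runIndex c) c default

lemma runValue_runIndex [Inhabited α] (i : ℕ) : runValue c (runIndex c i) = c i :=
  (runIndex_factorsThrough c).extend_apply _ i

lemma runValue_succ_ne [Inhabited α] {k N : ℕ} (h : k < runIndex c N) :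
    runValue c (k + 1) ≠ runValue c k := by
  obtain ⟨i, -, hi, hi'⟩ := exists_runIndex_succ_eq c h
  rw [← hi', ← hi, runValue_runIndex, runValue_runIndex, ne_eq, ← runIndex_succ_eq_iff]
  omega

end RunIndex

def backwardDiff {R : Type*} [Sub R] (v : ℕ → R) : ℕ → R
  | 0 => v 0
  | k + 1 => v (k + 1) - v k

theorem add_nestEvalAux_eq {p : ℕ} {M B v : ℕ → ZMod p} (m : ℕ) {k K : ℕ} {w : ZMod p}
    (hBk : B k = v k - w) (hB : ∀ j, k ≤ j → j < k + m → B (j + 1) = v (j + 1) - v j)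
    (hkK : k ≤ K) (hKm : K ≤ k + m) (hM1 : ∀ j, k ≤ j → j < K → M j = 1)
    (hM0 : K < k + m → M K = 0) :
    w + nestEvalAux p M B m k = v K := by
  induction m generalizing k w with
  | zero =>
    obtain rfl : K = k := by omega
    rw [nestEvalAux, hBk, add_sub_cancel]
  | succ m ih =>
    rw [nestEvalAux]
    rcases hkK.eq_or_lt with rfl | hlt
    · rw [hM0 (by omega), hBk]
      ring
    · have h := ih (k := k + 1) (w := v k) (hB k le_rfl (by omega))
        (fun j h1 h2 => hB j (by omega) (by omega)) hlt (by omega)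
        (fun j h1 h2 => hM1 j (by omega) h2) (fun h => hM0 (by omega))
      rw [hM1 k le_rfl hlt, hBk, ← h]
      ring

section Segment

variable {p : ℕ} {S : Finset (ZMod p)}

lemma IsSegment.neZero (h : IsSegment p S) : NeZero p :=
  let ⟨_, hj, _⟩ := h
  ⟨by omega⟩

lemma IsSegment.compl [NeZero p] (h : IsSegment p S) : IsSegment p Sᶜ := by
  obtain ⟨j, hj, h1 | h1⟩ := h
  · exact ⟨j, hj, Or.inr fun x => by simp [h1 x]⟩
  · exact ⟨j, hj, Or.inl fun x => by simp [h1 x]⟩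

lemma Qind_of_mem {x : ZMod p} (h : x ∈ S) : Qind p S x = 0 := if_pos h

lemma Qind_of_notMem {x : ZMod p} (h : x ∉ S) : Qind p S x = 1 := if_neg h

end Segment

def canalizedOutput {α : Type*} {n : ℕ} (b : Fin n → α) (bout : α) (i : ℕ) : α :=
  if h : i < n then b ⟨i, h⟩ else bout

section NestedWith

variable {p n : ℕ} {f : (Fin n → ZMod p) → ZMod p} {σ : Equiv.Perm (Fin n)}
  {S : Fin n → Finset (ZMod p)} {b : Fin n → ZMod p} {bout : ZMod p}

lemma NestedWith.exists_eq_canalizedOutput (hN : NestedWith p n f σ S b bout)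
    (x : Fin n → ZMod p) :
    ∃ i ≤ n, f x = canalizedOutput b bout i ∧ (∀ j : Fin n, (j : ℕ) < i → x (σ j) ∉ S j) ∧
      ∀ j : Fin n, (j : ℕ) = i → x (σ j) ∈ S j := by
  by_cases h : ∃ j, x (σ j) ∈ S j
  · obtain ⟨i, hi, hmin⟩ := WellFounded.has_min wellFounded_lt {j | x (σ j) ∈ S j} h
    have hbefore : ∀ j : Fin n, j < i → x (σ j) ∉ S j := fun j hj hjS => hmin j hjS hj
    refine ⟨i, i.isLt.le, ?_, hbefore, fun j hj => Fin.ext hj ▸ hi⟩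
    simpa [canalizedOutput] using hN.2.1 x i hi hbefore
  · push Not at h
    refine ⟨n, le_rfl, ?_, fun j _ => h j, fun j hj => absurd hj j.isLt.ne⟩
    simpa [canalizedOutput] using hN.2.2 x h

lemma NestedWith.flipLast {m : ℕ} {f : (Fin (m + 1) → ZMod p) → ZMod p}
    {σ : Equiv.Perm (Fin (m + 1))} {S : Fin (m + 1) → Finset (ZMod p)}
    {b : Fin (m + 1) → ZMod p} [NeZero p] (hN : NestedWith p (m + 1) f σ S b bout) :
    NestedWith p (m + 1) f σ (Function.update S (Fin.last m) (S (Fin.last m))ᶜ)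
      (Function.update b (Fin.last m) bout) (b (Fin.last m)) := by
  obtain ⟨hseg, hfirst, hnone⟩ := hN
  refine ⟨fun i => ?_, fun x i hi hbefore => ?_, fun x hx => ?_⟩
  · rcases eq_or_ne i (Fin.last m) with rfl | hi
    · simpa using (hseg _).compl
    · simpa [hi] using hseg i
  · rcases eq_or_ne i (Fin.last m) with rfl | hne
    · simp only [Function.update_self, mem_compl] at hi ⊢
      refine hnone x fun j => ?_
      rcases (Fin.le_last j).lt_or_eq with hj | rfl
      · simpa [hj.ne] using hbefore j hj
      · exact hi
    · have hlt := (Fin.le_last i).lt_of_ne hne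
      simp only [Function.update_of_ne hne] at hi ⊢
      exact hfirst x i hi fun j hj => by simpa [(hj.trans hlt).ne] using hbefore j hj
  · have hlast := hx (Fin.last m)
    simp only [Function.update_self, mem_compl, not_not] at hlast
    exact hfirst x _ hlast fun j hj => by simpa [hj.ne] using hx j

end NestedWith

section CanonicalForm

variable {p m : ℕ} (σ : Equiv.Perm (Fin (m + 2))) (S : Fin (m + 2) → Finset (ZMod p))
  (hS : ∀ i, IsSegment p (S i)) (c : ℕ → ZMod p) (hlast : c (m + 2) ≠ c (m + 1))
  (hprev : c (m + 2) ≠ c m)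

noncomputable def canonicalDatumOfRuns : CanonicalDatum p (m + 2) where
  r := runIndex c (m + 2)
  r_pos := by rw [runIndex_succ_of_ne c hlast]; omega
  r_le := runIndex_le_self c _
  A k := {v | runIndex c (σ.symm v) = k}
  A_nonempty k := by
    obtain ⟨i, hi, hk, -⟩ := exists_runIndex_succ_eq c k.isLt
    exact ⟨σ ⟨i, hi⟩, by simp [hk]⟩
  A_disjoint k l hkl := disjoint_filter.2 fun v _ hk hl => hkl (Fin.ext (hk.symm.trans hl))
  A_cover v := by
    have hlt : runIndex c (σ.symm v) < runIndex c (m + 2) := by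
      rw [runIndex_succ_of_ne c hlast, Nat.lt_succ_iff]
      exact runIndex_monotone c (Nat.lt_succ_iff.1 (σ.symm v).isLt)
    exact ⟨⟨_, hlt⟩, by simp⟩
  S j := S (σ.symm j)
  S_seg j := hS _
  B k := backwardDiff (runValue c) k
  B_ne := by
    rintro ⟨_ | k, hk⟩ hpos
    · exact absurd hpos (lt_irrefl 0)
    · exact sub_ne_zero.2 (runValue_succ_ne c (Nat.lt_of_succ_lt_succ hk))
  last_cond := by
    intro hcard
    have h2 : runIndex c (m + 2) = runIndex c (m + 1) + 1 := runIndex_succ_of_ne c hlast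
    have h1 : runIndex c (m + 1) = runIndex c m + 1 := by
      refine runIndex_succ_of_ne c fun heq => ?_
      have hsame := card_le_one.1 hcard.le (σ ⟨m, by omega⟩)
        (by simp [(runIndex_succ_eq_iff c m).2 heq, h2]) (σ ⟨m + 1, by omega⟩) (by simp [h2])
      simp [Fin.ext_iff] at hsame
    show backwardDiff (runValue c) (runIndex c (m + 2) - 1) +
      backwardDiff (runValue c) (runIndex c (m + 2)) ≠ 0
    rw [h2, h1, Nat.add_sub_cancel]
    have hsum : backwardDiff (runValue c) (runIndex c m + 1) +
        backwardDiff (runValue c) (runIndex c m + 1 + 1) = c (m + 2) - c m := by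
      rw [← runValue_runIndex c (m + 2), ← runValue_runIndex c m, h2, h1]
      simp only [backwardDiff]
      ring
    rw [hsum]
    exact sub_ne_zero.2 hprev

theorem canonicalDatumOfRuns_eval (x : Fin (m + 2) → ZMod p) {i : ℕ} (hi : i ≤ m + 2)
    (hbefore : ∀ j : Fin (m + 2), (j : ℕ) < i → x (σ j) ∉ S j)
    (hat : ∀ j : Fin (m + 2), (j : ℕ) = i → x (σ j) ∈ S j) :
    (canonicalDatumOfRuns σ S hS c hlast hprev).eval x = c i := by
  set d := canonicalDatumOfRuns σ S hS c hlast hprev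
  have hr : d.r = runIndex c (m + 2) := rfl
  rw [← runValue_runIndex c i, CanonicalDatum.eval, ← zero_add (nestEvalAux _ _ _ _ _)]
  refine add_nestEvalAux_eq _ ?_ (fun j _ hj => ?_) (Nat.zero_le _)
    (by rw [zero_add, hr]; exact runIndex_monotone c hi) (fun j _ hj => ?_) (fun hK => ?_)
  · simp [d, CanonicalDatum.Bn, canonicalDatumOfRuns, backwardDiff]
  · rw [zero_add, hr] at hj
    simp [d, CanonicalDatum.Bn, canonicalDatumOfRuns, backwardDiff,
      show j + 1 < runIndex c (m + 2) + 1 by omega]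
  · rw [CanonicalDatum.layer, dif_pos (by rw [hr]; exact hj.trans_le (runIndex_monotone c hi))]
    refine prod_eq_one fun v hv => Qind_of_notMem ?_
    simp only [d, canonicalDatumOfRuns, mem_filter, mem_univ, true_and] at hv
    simpa [d, canonicalDatumOfRuns] using
      hbefore (σ.symm v) ((runIndex_monotone c).reflect_lt (hv ▸ hj))
  · rw [zero_add] at hK
    have hin : i < m + 2 := by
      by_contra hge
      rw [show i = m + 2 by omega] at hK
      omega
    rw [CanonicalDatum.layer, dif_pos hK]
    exact prod_eq_zero (i := σ ⟨i, hin⟩) (by simp [d, canonicalDatumOfRuns])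
      (Qind_of_mem (by simpa [d, canonicalDatumOfRuns] using hat ⟨i, hin⟩ rfl))

end CanonicalForm

theorem NestedWith.exists_canonicalDatum {p m : ℕ} {f : (Fin (m + 2) → ZMod p) → ZMod p}
    {σ : Equiv.Perm (Fin (m + 2))} {S : Fin (m + 2) → Finset (ZMod p)}
    {b : Fin (m + 2) → ZMod p} {bout : ZMod p} (hN : NestedWith p (m + 2) f σ S b bout)
    (hlast : b (Fin.last (m + 1)) ≠ bout) (hprev : b ⟨m, by omega⟩ ≠ bout) :
    ∃ d : CanonicalDatum p (m + 2), ∀ x, f x = d.eval x := by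
  have hlast' : canalizedOutput b bout (m + 2) ≠ canalizedOutput b bout (m + 1) := by
    simpa [canalizedOutput, Fin.last] using hlast.symm
  have hprev' : canalizedOutput b bout (m + 2) ≠ canalizedOutput b bout m := by
    simpa [canalizedOutput] using hprev.symm
  refine ⟨canonicalDatumOfRuns σ S hN.1 _ hlast' hprev', fun x => ?_⟩
  obtain ⟨i, hi, hfx, hbefore, hat⟩ := hN.exists_eq_canalizedOutput x
  rw [hfx, canonicalDatumOfRuns_eval σ S hN.1 _ hlast' hprev' x hi hbefore hat]

theorem stmt2_general (p n : ℕ) (hn : 2 ≤ n)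
    (f : (Fin n → ZMod p) → ZMod p) (hf : IsNCF p n f) :
    ∃ d : CanonicalDatum p n, ∀ x, f x = d.eval x := by
  obtain ⟨m, rfl⟩ : ∃ m, n = m + 2 := ⟨n - 2, by omega⟩
  obtain ⟨σ, S, b, bout, hb, hN⟩ := hf
  have : NeZero p := (hN.1 0).neZero
  have hlast : b (Fin.last (m + 1)) ≠ bout := hb (by omega)
  by_cases hprev : b ⟨m, by omega⟩ = bout
  · refine hN.flipLast.exists_canonicalDatum (by simpa using hlast.symm) ?_
    have hm : (⟨m, by omega⟩ : Fin (m + 2)) ≠ Fin.last (m + 1) := by simp [Fin.ext_iff]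
    rwa [Function.update_of_ne hm, hprev, ne_comm]
  · exact hN.exists_canonicalDatum hlast hprev

/-- every nested canalizing function is defined by some canonical datum. -/
theorem stmt2 (p n : ℕ) [Fact (Nat.Prime p)] (hn : 2 ≤ n)
    (f : (Fin n → ZMod p) → ZMod p) (hf : IsNCF p n f) :
    ∃ d : CanonicalDatum p n, ∀ x, f x = d.eval x :=
  stmt2_general p n hn f hf
end

section
/- Let p be a prime, F = F_p, and k ≥ 2. For any a, b ∈ F∖{0} and segments S_1,…,S_k of F, the function f : F^k → F defined by f(x_1,…,x_k) = b·∏_{j=1}^k Q_{S_j}(x_j) + a is not equal to the function (x_1,…,x_k) ↦ c·∏_{j=1}^k Q_{S'_j}(x_j) for any c ∈ F∖{0} and any segments S'_1,…,S'_k of F. -/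
lemma IsSegment.one_lt {p : ℕ} {S : Finset (ZMod p)} (h : IsSegment p S) : 1 < p := by
  obtain ⟨j, hj, -⟩ := h
  omega

lemma IsSegment.nonempty {p : ℕ} {S : Finset (ZMod p)} (h : IsSegment p S) : S.Nonempty := by
  have hp := h.one_lt
  obtain ⟨j, hj, hS | hS⟩ := h
  · exact ⟨0, (hS 0).2 (by simp [ZMod.val_zero])⟩
  · refine ⟨((j + 1 : ℕ) : ZMod p), (hS _).2 ?_⟩
    rw [ZMod.val_natCast, Nat.mod_eq_of_lt (by omega)]
    omega

lemma prod_Qind_eq_zero {p k : ℕ} (S : Fin k → Finset (ZMod p)) (x : Fin k → ZMod p)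
    {i : Fin k} (hi : x i ∈ S i) : ∏ j, Qind p (S j) (x j) = 0 :=
  Finset.prod_eq_zero (Finset.mem_univ i) (if_pos hi)

theorem stmt6_general (p k : ℕ) (hk : 2 ≤ k)
    (a b : ZMod p) (ha : a ≠ 0)
    (S : Fin k → Finset (ZMod p)) (hS : ∀ j, IsSegment p (S j))
    (c : ZMod p)
    (S' : Fin k → Finset (ZMod p)) (hS' : ∀ j, IsSegment p (S' j)) :
    (fun x : Fin k → ZMod p => b * ∏ j, Qind p (S j) (x j) + a) ≠
      fun x : Fin k → ZMod p => c * ∏ j, Qind p (S' j) (x j) := by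
  let i₀ : Fin k := ⟨0, by omega⟩
  let i₁ : Fin k := ⟨1, by omega⟩
  have hi : i₁ ≠ i₀ := by simp [i₀, i₁, Fin.ext_iff]
  -- At a point whose `i₀`-th coordinate lies in `S i₀` and whose `i₁`-th lies in `S' i₁`,
  -- both products vanish, so the two functions take the values `a ≠ 0` and `0`.
  obtain ⟨s, hs⟩ := (hS i₀).nonempty
  obtain ⟨s', hs'⟩ := (hS' i₁).nonempty
  let x : Fin k → ZMod p := Function.update (fun _ => s') i₀ s
  have hx₀ : x i₀ ∈ S i₀ := by simpa [x] using hs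
  have hx₁ : x i₁ ∈ S' i₁ := by simpa [x, Function.update_of_ne hi] using hs'
  intro h
  have hval := congrFun h x
  rw [prod_Qind_eq_zero S x hx₀, prod_Qind_eq_zero S' x hx₁, mul_zero, mul_zero,
    zero_add] at hval
  exact ha hval

/-- Lemma 3.2 (1): for `k ≥ 2`, `a, b ≠ 0` and segments `S₁,…,S_k`, the
function `b·∏ⱼ Q_{Sⱼ}(xⱼ) + a` cannot be written as `c·∏ⱼ Q_{S'ⱼ}(xⱼ)` with `c ≠ 0`
and segments `S'₁,…,S'_k`. -/
theorem stmt6 (p k : ℕ) [Fact (Nat.Prime p)] (hk : 2 ≤ k)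
    (a b : ZMod p) (ha : a ≠ 0) (hb : b ≠ 0)
    (S : Fin k → Finset (ZMod p)) (hS : ∀ j, IsSegment p (S j))
    (c : ZMod p) (hc : c ≠ 0)
    (S' : Fin k → Finset (ZMod p)) (hS' : ∀ j, IsSegment p (S' j)) :
    (fun x : Fin k → ZMod p => b * ∏ j, Qind p (S j) (x j) + a) ≠
      fun x : Fin k → ZMod p => c * ∏ j, Qind p (S' j) (x j) :=
  stmt6_general p k hk a b ha S hS c S' hS'
end

section
/- Let p be a prime and F = F_p. The number of triples (x, y, S), where x, y ∈ F with x ≠ y and S is a segment of F such that exactly one of x, y lies in S, equals 2p(p²−1)/3. Equivalently, since there are p(p−1) ordered pairs (x,y) with x ≠ y and 2(p−1) segments, if (x,y,S) is chosen uniformly at random among all such triples with x ≠ y, the probability that exactly one of x, y lies in S is (p+1)/(3(p−1)). -/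
/-! A segment `S` separates exactly `2 |S| |Sᶜ|` ordered pairs, and the segments are the sets
`{x | x.val ≤ j}` (of size `j + 1`) for `j < p - 1` together with their complements. The count is
therefore `4 ∑_{j < p-1} (j + 1)(p - 1 - j) = 4 (p + 1) p (p - 1) / 6`. -/

open Finset

lemma card_filter_mem_xor_mem {α : Type*} [Fintype α] [DecidableEq α] (S : Finset α) :
    #{xy : α × α | (xy.1 ∈ S ∧ xy.2 ∉ S) ∨ (xy.1 ∉ S ∧ xy.2 ∈ S)} = 2 * (#S * #Sᶜ) := by
  have h : ({xy : α × α | (xy.1 ∈ S ∧ xy.2 ∉ S) ∨ (xy.1 ∉ S ∧ xy.2 ∈ S)} : Finset _)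
      = S ×ˢ Sᶜ ∪ Sᶜ ×ˢ S := by
    ext; simp
  rw [h, card_union_of_disjoint (disjoint_product.mpr (Or.inl disjoint_compl_right)),
    card_product, card_product]
  ring

lemma card_filter_prod_prod {α β : Type*} [Fintype α] [Fintype β]
    (q : β → Prop) [DecidablePred q] (r : α → α → β → Prop) [∀ x y b, Decidable (r x y b)] :
    #{t : α × α × β | q t.2.2 ∧ r t.1 t.2.1 t.2.2} =
      ∑ b with q b, #{xy : α × α | r xy.1 xy.2 b} := by
  simp only [card_filter, sum_filter, ite_and, Fintype.sum_prod_type]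
  conv_lhs => enter [2, x]; rw [sum_comm]
  rw [sum_comm]
  simp only [sum_ite_irrel, sum_const_zero]

lemma six_mul_sum_range_succ_mul_sub (m : ℕ) :
    6 * ∑ j ∈ range m, (j + 1) * (m - j) = m * (m + 1) * (m + 2) := by
  induction m with
  | zero => simp
  | succ m ih =>
    have hsummand : ∀ j ∈ range (m + 1), (j + 1) * (m + 1 - j) = (j + 1) * (m - j) + (j + 1) := by
      intro j hj
      rw [Nat.sub_add_comm (Nat.lt_succ_iff.mp (mem_range.mp hj))]
      ring
    have hsplit : ∑ j ∈ range (m + 1), (j + 1) * (m + 1 - j)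
        = ∑ j ∈ range m, (j + 1) * (m - j) + ∑ j ∈ range (m + 2), j := by
      rw [sum_congr rfl hsummand, sum_add_distrib, sum_range_succ _ m, sum_range_succ' _ (m + 1)]
      simp
    calc 6 * ∑ j ∈ range (m + 1), (j + 1) * (m + 1 - j)
        = 6 * ∑ j ∈ range m, (j + 1) * (m - j) + 3 * ((∑ j ∈ range (m + 2), j) * 2) := by
          rw [hsplit]; ring
      _ = (m + 1) * (m + 1 + 1) * (m + 1 + 2) := by
          rw [ih, sum_range_id_mul_two, show m + 2 - 1 = m + 1 by omega]; ring

section Segments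

variable {n : ℕ} [NeZero n]

def lowerSegment (n : ℕ) [NeZero n] (j : ℕ) : Finset (ZMod n) := {x | x.val ≤ j}

lemma card_lowerSegment {j : ℕ} (hj : j < n) : #(lowerSegment n j) = j + 1 := by
  rw [← card_range (j + 1)]
  refine card_nbij' ZMod.val Nat.cast (fun x hx => ?_) (fun a ha => ?_) (fun x _ => ?_)
    (fun a ha => ?_)
  · simpa [lowerSegment, Nat.lt_succ_iff] using hx
  · simp only [coe_range, Set.mem_Iio, Nat.lt_succ_iff] at ha
    simp [lowerSegment, ZMod.val_cast_of_lt (ha.trans_lt hj), ha]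
  · simp
  · simp only [coe_range, Set.mem_Iio] at ha
    exact ZMod.val_cast_of_lt (ha.trans_le hj)

lemma zero_mem_lowerSegment (j : ℕ) : (0 : ZMod n) ∈ lowerSegment n j := by
  simp [lowerSegment]

lemma isSegment_iff (S : Finset (ZMod n)) :
    IsSegment n S ↔ ∃ j < n - 1, S = lowerSegment n j ∨ S = (lowerSegment n j)ᶜ := by
  refine exists_congr fun j => and_congr_right fun _ => or_congr ?_ ?_ <;>
    simp [Finset.ext_iff, lowerSegment]

lemma sum_isSegment {M : Type*} [AddCommMonoid M] [DecidablePred (IsSegment n)]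
    (g : Finset (ZMod n) → M) :
    ∑ S with IsSegment n S, g S =
      ∑ j ∈ range (n - 1), (g (lowerSegment n j) + g (lowerSegment n j)ᶜ) := by
  have hsegs : ({S | IsSegment n S} : Finset _) =
      (range (n - 1)).image (lowerSegment n) ∪
        (range (n - 1)).image fun j => (lowerSegment n j)ᶜ := by
    ext S
    simp only [mem_filter, mem_univ, true_and, isSegment_iff, mem_union, mem_image, mem_range]
    grind
  have hinj : Set.InjOn (lowerSegment n) (range (n - 1)) := by
    intro a ha b hb hab
    simp only [coe_range, Set.mem_Iio] at ha hb
    have := congrArg card hab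
    rw [card_lowerSegment (by omega), card_lowerSegment (by omega)] at this
    omega
  have hdisj : Disjoint ((range (n - 1)).image (lowerSegment n))
      ((range (n - 1)).image fun j => (lowerSegment n j)ᶜ) := by
    simp only [disjoint_left, mem_image, not_exists, not_and]
    rintro _ ⟨i, -, rfl⟩ j - h
    exact (mem_compl.mp (h ▸ zero_mem_lowerSegment i)) (zero_mem_lowerSegment j)
  rw [hsegs, sum_union hdisj, sum_image hinj,
    sum_image fun a ha b hb hab => hinj ha hb (compl_injective hab), sum_add_distrib]

end Segments

lemma three_mul_ncard_segment_separated (n : ℕ) [NeZero n] :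
    3 * Set.ncard {t : ZMod n × ZMod n × Finset (ZMod n) |
        t.1 ≠ t.2.1 ∧ IsSegment n t.2.2 ∧
        ((t.1 ∈ t.2.2 ∧ t.2.1 ∉ t.2.2) ∨ (t.1 ∉ t.2.2 ∧ t.2.1 ∈ t.2.2))} =
      2 * n * (n ^ 2 - 1) := by
  classical
  have hdistinct : {t : ZMod n × ZMod n × Finset (ZMod n) |
        t.1 ≠ t.2.1 ∧ IsSegment n t.2.2 ∧
        ((t.1 ∈ t.2.2 ∧ t.2.1 ∉ t.2.2) ∨ (t.1 ∉ t.2.2 ∧ t.2.1 ∈ t.2.2))} =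
      {t | IsSegment n t.2.2 ∧
        ((t.1 ∈ t.2.2 ∧ t.2.1 ∉ t.2.2) ∨ (t.1 ∉ t.2.2 ∧ t.2.1 ∈ t.2.2))} := by
    ext ⟨x, y, S⟩
    simp only [Set.mem_ofPred_eq, and_iff_right_iff_imp]
    rintro ⟨-, h⟩ rfl
    tauto
  have hterm : ∀ j ∈ range (n - 1),
      2 * (#(lowerSegment n j) * #(lowerSegment n j)ᶜ) +
        2 * (#(lowerSegment n j)ᶜ * #(lowerSegment n j)ᶜᶜ) = 4 * ((j + 1) * (n - 1 - j)) := by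
    intro j hj
    rw [mem_range] at hj
    rw [compl_compl, card_compl, ZMod.card, card_lowerSegment (by omega),
      show n - (j + 1) = n - 1 - j by omega]
    ring
  rw [hdistinct, Set.ncard_eq_toFinset_card', Set.toFinset_ofPred,
    card_filter_prod_prod (IsSegment n) fun x y S => (x ∈ S ∧ y ∉ S) ∨ (x ∉ S ∧ y ∈ S)]
  simp only [card_filter_mem_xor_mem]
  rw [sum_isSegment, sum_congr rfl hterm, ← mul_sum]
  have hn : 1 ≤ n := NeZero.pos n
  have hsum := six_mul_sum_range_succ_mul_sub (n - 1)
  rw [Nat.sub_add_cancel hn, show n - 1 + 2 = n + 1 by omega] at hsum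
  calc 3 * (4 * ∑ j ∈ range (n - 1), (j + 1) * (n - 1 - j))
      = 2 * (6 * ∑ j ∈ range (n - 1), (j + 1) * (n - 1 - j)) := by ring
    _ = 2 * n * (n ^ 2 - 1) := by
      rw [hsum]
      zify [hn, Nat.one_le_pow 2 n hn]
      ring

/-- the number of triples `(x, y, S)` with `x ≠ y` and `S` a segment such
that exactly one of `x, y` lies in `S` equals `2p(p²−1)/3`; equivalently, the
corresponding probability is `(p+1)/(3(p−1))`. -/
theorem stmt14 (p : ℕ) [Fact (Nat.Prime p)] :
    3 * Set.ncard {t : ZMod p × ZMod p × Finset (ZMod p) |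
        t.1 ≠ t.2.1 ∧ IsSegment p t.2.2 ∧
        ((t.1 ∈ t.2.2 ∧ t.2.1 ∉ t.2.2) ∨ (t.1 ∉ t.2.2 ∧ t.2.1 ∈ t.2.2))} =
      2 * p * (p ^ 2 - 1) ∧
    (Set.ncard {t : ZMod p × ZMod p × Finset (ZMod p) |
        t.1 ≠ t.2.1 ∧ IsSegment p t.2.2 ∧
        ((t.1 ∈ t.2.2 ∧ t.2.1 ∉ t.2.2) ∨ (t.1 ∉ t.2.2 ∧ t.2.1 ∈ t.2.2))} : ℚ) /
        ((p : ℚ) * ((p : ℚ) - 1) * (2 * ((p : ℚ) - 1))) =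
      ((p : ℚ) + 1) / (3 * ((p : ℚ) - 1)) := by
  have hcount := three_mul_ncard_segment_separated p
  refine ⟨hcount, ?_⟩
  have hp : (2 : ℚ) ≤ p := by exact_mod_cast (Fact.out : p.Prime).two_le
  have hp0 : (p : ℚ) ≠ 0 := by positivity
  have hp1 : (p : ℚ) - 1 ≠ 0 := (sub_pos.mpr (by linarith)).ne'
  have hcountℚ := congrArg (Nat.cast : ℕ → ℚ) hcount
  push_cast [Nat.one_le_pow 2 p (NeZero.pos p)] at hcountℚ
  rw [div_eq_div_iff (by simp [hp0, hp1]) (by simp [hp1])]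
  linear_combination (p - 1) * hcountℚ
end
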